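/- arXiv:math/0701359 — 4 statements merged into one kernel-verified Lean document; each statement's English description precedes it below -/
import Mathlib

section
/- For an n-state ergodic homogeneous Markov chain with irreducible stochastic transition matrix T, the matrix M of mean first passage times satisfies M = (I - L^# + J L^#_dg) Π^{-1}, where L = I - T, L^# is the group inverse of L, L^#_dg is the diagonal part of L^#, J is the all-ones matrix, and Π is the diagonal matrix of the stationary distribution π. -/
open scoped Classical
open Finset Matrix

namespace MFPT

variable {n : ℕ}

/-- The step relation of a functional subgraph: `a → b` when `F a = some b`. -/
def Step (F : Fin n → Option (Fin n)) (a b : Fin n) : Prop := F a = some b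

/-- `F` is a spanning in-forest of the weighted digraph with weight matrix `w`:
every chosen arc is a genuine (loopless, positive-weight) arc and there is no directed cycle.
Each weak component of such a functional digraph is a converging tree (root = the vertex
mapped to `none`). -/
def IsInForest (w : Matrix (Fin n) (Fin n) ℝ) (F : Fin n → Option (Fin n)) : Prop :=
  (∀ v u, F v = some u → v ≠ u ∧ 0 < w v u) ∧ ∀ v, ¬ Relation.TransGen (Step F) v v

/-- Weight of a spanning subgraph: the product of its arc weights. -/
noncomputable def forestWeight (w : Matrix (Fin n) (Fin n) ℝ) (F : Fin n → Option (Fin n)) : ℝ :=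
  ∏ v, (F v).elim 1 (fun u => w v u)

/-- Number of arcs of a functional subgraph. -/
def arcCount (F : Fin n → Option (Fin n)) : ℕ :=
  (Finset.univ.filter fun v => (F v).isSome).card

/-- Vertex `i` belongs to the tree of `F` converging to (rooted at) `j`. -/
def InTreeOf (F : Fin n → Option (Fin n)) (i j : Fin n) : Prop :=
  Relation.ReflTransGen (Step F) i j ∧ F j = none

/-- `σ_k`: total weight of spanning in-forests with `k` arcs. -/
noncomputable def sigmaW (w : Matrix (Fin n) (Fin n) ℝ) (k : ℕ) : ℝ :=
  ∑ F : Fin n → Option (Fin n),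
    if IsInForest w F ∧ arcCount F = k then forestWeight w F else 0

/-- `Q_k`: the matrix whose `(i,j)` entry is the total weight of in-forests with `k` arcs
in which `i` belongs to the tree converging to `j`. -/
noncomputable def Qmat (w : Matrix (Fin n) (Fin n) ℝ) (k : ℕ) : Matrix (Fin n) (Fin n) ℝ :=
  Matrix.of fun i j => ∑ F : Fin n → Option (Fin n),
    if IsInForest w F ∧ arcCount F = k ∧ InTreeOf F i j then forestWeight w F else 0

/-- `q_j`: total weight of spanning trees converging to `j` (in-forests with `n-1` arcs
whose unique root is `j`). -/
noncomputable def treeWeight (w : Matrix (Fin n) (Fin n) ℝ) (j : Fin n) : ℝ :=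
  ∑ F : Fin n → Option (Fin n),
    if IsInForest w F ∧ arcCount F = n - 1 ∧ F j = none then forestWeight w F else 0

/-- `f_{ij}`: total weight of 2-tree in-forests having one tree containing `i` and the other
tree converging to `j`. -/
noncomputable def fWeight (w : Matrix (Fin n) (Fin n) ℝ) (i j : Fin n) : ℝ :=
  ∑ F : Fin n → Option (Fin n),
    if IsInForest w F ∧ arcCount F = n - 2 ∧ F j = none ∧
        ¬ Relation.ReflTransGen (Step F) i j
      then forestWeight w F else 0

/-- The Laplacian matrix of the weighted digraph with weight matrix `w`. -/
noncomputable def lap (w : Matrix (Fin n) (Fin n) ℝ) : Matrix (Fin n) (Fin n) ℝ :=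
  Matrix.of fun i j => if i = j then ∑ k ∈ Finset.univ.erase i, w i k else - w i j

/-- `X` is the group inverse of `L`. -/
def IsGroupInverse (L X : Matrix (Fin n) (Fin n) ℝ) : Prop :=
  L * X * L = L ∧ X * L * X = X ∧ L * X = X * L

/-- `T` is (row-)stochastic. -/
def IsStochastic (T : Matrix (Fin n) (Fin n) ℝ) : Prop :=
  (∀ i j, 0 ≤ T i j) ∧ ∀ i, ∑ j, T i j = 1

/-- Irreducibility of `T`. -/
def IsIrreducible (T : Matrix (Fin n) (Fin n) ℝ) : Prop :=
  ∀ i j, ∃ k : ℕ, 0 < (T ^ k) i j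

/-- Ergodicity (primitivity) of `T`: some power of `T` is entrywise positive. -/
def IsErgodic (T : Matrix (Fin n) (Fin n) ℝ) : Prop :=
  ∃ N : ℕ, ∀ i j, 0 < (T ^ N) i j

/-- `π` is a stationary distribution of `T`. -/
def IsStationary (T : Matrix (Fin n) (Fin n) ℝ) (π : Fin n → ℝ) : Prop :=
  (∀ i, 0 ≤ π i) ∧ (∑ i, π i = 1) ∧ ∀ j, ∑ i, π i * T i j = π j

/-- Probability of the trajectory `p` of length `k` under transition matrix `T`. -/
noncomputable def pathProb (T : Matrix (Fin n) (Fin n) ℝ) (k : ℕ)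
    (p : Fin (k + 1) → Fin n) : ℝ :=
  ∏ t : Fin k, T (p t.castSucc) (p t.succ)

/-- `Pr(F_{ij} = k)`: probability that, starting at `i`, the chain first reaches `j`
(at a step `p ≥ 1`) exactly at time `k`. -/
noncomputable def firstPassageProb (T : Matrix (Fin n) (Fin n) ℝ) (i j : Fin n) (k : ℕ) : ℝ :=
  ∑ p : Fin (k + 1) → Fin n,
    if p 0 = i ∧ p (Fin.last k) = j ∧
        (∀ t : Fin (k + 1), t ≠ 0 → t ≠ Fin.last k → p t ≠ j)
      then pathProb T k p else 0

/-- Mean first passage time `m_{ij} = E F_{ij} = ∑ k k·Pr(F_{ij}=k)`. -/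
noncomputable def mfpt (T : Matrix (Fin n) (Fin n) ℝ) (i j : Fin n) : ℝ :=
  ∑' k : ℕ, (k : ℝ) * firstPassageProb T i j k

end MFPT

namespace MFPT

variable {n : ℕ}

/-- transition matrix with column `j` zeroed out. -/
noncomputable def Qm (T : Matrix (Fin n) (Fin n) ℝ) (j : Fin n) : Matrix (Fin n) (Fin n) ℝ :=
  Matrix.of fun l m => if m = j then 0 else T l m

lemma pathProb_cons (T : Matrix (Fin n) (Fin n) ℝ) (k : ℕ) (x : Fin n)
    (q : Fin (k + 1) → Fin n) :
    pathProb T (k + 1) (Fin.cons x q) = T x (q 0) * pathProb T k q := by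
  unfold pathProb
  rw [Fin.prod_univ_succ]
  congr 1

lemma fp_one (T : Matrix (Fin n) (Fin n) ℝ) (i j : Fin n) :
    firstPassageProb T i j 1 = T i j := by
  unfold firstPassageProb
  have h : ∀ p : Fin 2 → Fin n,
      (p 0 = i ∧ p (Fin.last 1) = j ∧ ∀ t : Fin 2, t ≠ 0 → t ≠ Fin.last 1 → p t ≠ j)
        ↔ p = ![i, j] := by
    intro p
    constructor
    · rintro ⟨h0, h1, -⟩
      funext t
      fin_cases t
      · exact h0
      · exact h1
    · rintro rfl
      refine ⟨rfl, rfl, ?_⟩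
      intro t h0 h1
      fin_cases t
      · exact absurd rfl h0
      · exact absurd rfl h1
  rw [Finset.sum_congr rfl (fun p _ => if_congr (h p) rfl rfl)]
  rw [Finset.sum_ite_eq' Finset.univ]
  simp [pathProb]

lemma fp_succ (T : Matrix (Fin n) (Fin n) ℝ) (i j : Fin n) (k : ℕ) :
    firstPassageProb T i j (k + 2) = ∑ l, Qm T j i l * firstPassageProb T l j (k + 1) := by
  unfold firstPassageProb
  rw [← (Fin.consEquiv (fun _ : Fin (k + 3) => Fin n)).sum_comp]
  rw [Fintype.sum_prod_type]
  -- collapse x on the LHS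
  have hL : ∀ (x : Fin n) (q : Fin (k + 2) → Fin n),
      (Fin.consEquiv fun _ : Fin (k + 3) => Fin n) (x, q) = (Fin.cons x q : Fin (k + 3) → Fin n) :=
    fun _ _ => rfl
  simp only [hL]
  have hcons0 : ∀ (x : Fin n) (q : Fin (k + 2) → Fin n), (Fin.cons x q : ∀ _ : Fin (k + 3), Fin n) 0 = x := fun x q => @Fin.cons_zero (k + 2) (fun _ => Fin n) x q
  have hconsl : ∀ (x : Fin n) (q : Fin (k + 2) → Fin n),
      (Fin.cons x q : ∀ _ : Fin (k + 3), Fin n) (Fin.last (k + 2)) = q (Fin.last (k + 1)) := by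
    intro x q
    rw [← Fin.succ_last]
    exact @Fin.cons_succ (k + 2) (fun _ => Fin n) x q _
  -- rewrite LHS inner sums
  have key : ∀ x : Fin n, (∑ q : Fin (k + 2) → Fin n,
      if (Fin.cons x q : Fin (k + 3) → Fin n) 0 = i ∧
          (Fin.cons x q : Fin (k + 3) → Fin n) (Fin.last (k + 2)) = j ∧
          (∀ t : Fin (k + 3), t ≠ 0 → t ≠ Fin.last (k + 2) →
            (Fin.cons x q : Fin (k + 3) → Fin n) t ≠ j)
        then pathProb T (k + 2) (Fin.cons x q) else 0)
      = ∑ q : Fin (k + 2) → Fin n,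
        if x = i ∧ q (Fin.last (k + 1)) = j ∧
            (∀ s : Fin (k + 2), s ≠ Fin.last (k + 1) → q s ≠ j)
          then T x (q 0) * pathProb T (k + 1) q else 0 := by
    intro x
    apply Finset.sum_congr rfl
    intro q _
    rw [pathProb_cons]
    apply if_congr _ rfl rfl
    rw [hcons0, hconsl]
    refine and_congr Iff.rfl (and_congr Iff.rfl ?_)
    rw [Fin.forall_fin_succ]
    constructor
    · rintro ⟨-, h⟩ s hs
      have := h s (Fin.succ_ne_zero s)
      rw [Fin.cons_succ] at this
      apply this
      rw [← Fin.succ_last]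
      exact fun hc => hs (Fin.succ_injective _ hc)
    · intro h
      refine ⟨fun hc => absurd rfl hc, ?_⟩
      intro s _ hsl
      rw [Fin.cons_succ]
      apply h
      rw [← Fin.succ_last] at hsl
      exact fun hc => hsl (by rw [hc])
  rw [Finset.sum_congr rfl fun x _ => key x]
  -- now both sides are sums over (x, q) resp. (l, q); compare termwise after collapsing
  -- LHS: collapse x = i
  rw [Finset.sum_eq_single i
    (by intro x _ hx; apply Finset.sum_eq_zero; intro q _;
        rw [if_neg]; exact fun hc => hx hc.1)
    (by intro h; exact absurd (Finset.mem_univ i) h)]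
  simp only [Finset.mul_sum, mul_ite, mul_zero]
  rw [Finset.sum_comm]
  apply Finset.sum_congr rfl
  intro q _
  -- collapse l = q 0 on the RHS
  rw [Finset.sum_eq_single (q 0)
    (by intro l _ hl; rw [if_neg]; exact fun hc => hl hc.1.symm)
    (by intro h; exact absurd (Finset.mem_univ (q 0)) h)]
  by_cases hlast : q (Fin.last (k + 1)) = j
  · by_cases h0 : q 0 = j
    · -- LHS condition fails (s = 0), RHS factor is 0
      have hQ : Qm T j i (q 0) = 0 := by rw [Qm]; simp [h0]
      rw [hQ, zero_mul, ite_self, if_neg]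
      rintro ⟨-, -, h⟩
      exact h 0 (by simp [Fin.ext_iff]) h0
    · -- conditions agree
      have : Qm T j i (q 0) = T i (q 0) := by rw [Qm]; simp [h0]
      rw [this]
      apply if_congr _ rfl rfl
      constructor
      · rintro ⟨-, hl, h⟩
        exact ⟨rfl, hl, fun t _ htl => h t htl⟩
      · rintro ⟨-, hl, h⟩
        refine ⟨trivial, hl, fun s hsl => ?_⟩
        by_cases hs0 : s = 0
        · rw [hs0]; exact h0
        · exact h s hs0 hsl
  · rw [if_neg (fun hc => hlast hc.2.1), if_neg (fun hc => hlast hc.2.1)]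

end MFPT

namespace MFPT

variable {n : ℕ}

lemma fp_pow (T : Matrix (Fin n) (Fin n) ℝ) (j : Fin n) (k : ℕ) :
    ∀ i, firstPassageProb T i j (k + 1) = ((Qm T j) ^ k * T) i j := by
  induction k with
  | zero => intro i; rw [fp_one, pow_zero, one_mul]
  | succ k ih =>
    intro i
    rw [fp_succ, pow_succ', Matrix.mul_assoc, Matrix.mul_apply]
    exact Finset.sum_congr rfl fun l _ => by rw [ih l]

variable {T : Matrix (Fin n) (Fin n) ℝ} {j : Fin n}

lemma Tpow_nonneg (hS : IsStochastic T) (k : ℕ) (i l : Fin n) : 0 ≤ (T ^ k) i l := by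
  induction k generalizing i l with
  | zero => rw [pow_zero]; by_cases h : i = l <;> simp [Matrix.one_apply, h]
  | succ k ih =>
    rw [pow_succ, Matrix.mul_apply]
    exact Finset.sum_nonneg fun m _ => mul_nonneg (ih i m) (hS.1 m l)

lemma Tpow_rowsum (hS : IsStochastic T) (k : ℕ) (i : Fin n) : ∑ l, (T ^ k) i l = 1 := by
  induction k generalizing i with
  | zero => simp [Matrix.one_apply]
  | succ k ih =>
    rw [pow_succ]
    simp only [Matrix.mul_apply]
    rw [Finset.sum_comm]
    calc ∑ m, ∑ l, (T ^ k) i m * T m l = ∑ m, (T ^ k) i m * ∑ l, T m l := by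
          simp [Finset.mul_sum]
      _ = 1 := by simp only [hS.2, mul_one]; exact ih i

lemma Q_nonneg (hS : IsStochastic T) (i l : Fin n) : 0 ≤ Qm T j i l := by
  rw [Qm]; dsimp only [Matrix.of_apply]
  split
  · exact le_refl 0
  · exact hS.1 i l

lemma Q_le_T (hS : IsStochastic T) (i l : Fin n) : Qm T j i l ≤ T i l := by
  rw [Qm]; dsimp only [Matrix.of_apply]
  split
  · exact hS.1 i l
  · exact le_refl _

lemma Qpow_nonneg (hS : IsStochastic T) (k : ℕ) (i l : Fin n) : 0 ≤ ((Qm T j) ^ k) i l := by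
  induction k generalizing i l with
  | zero => rw [pow_zero]; by_cases h : i = l <;> simp [Matrix.one_apply, h]
  | succ k ih =>
    rw [pow_succ, Matrix.mul_apply]
    exact Finset.sum_nonneg fun m _ => mul_nonneg (ih i m) (Q_nonneg hS m l)

lemma Qpow_le_Tpow (hS : IsStochastic T) (k : ℕ) (i l : Fin n) :
    ((Qm T j) ^ k) i l ≤ (T ^ k) i l := by
  induction k generalizing i l with
  | zero => simp
  | succ k ih =>
    rw [pow_succ, pow_succ, Matrix.mul_apply, Matrix.mul_apply]
    apply Finset.sum_le_sum
    intro m _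
    calc ((Qm T j) ^ k) i m * Qm T j m l ≤ (T ^ k) i m * Qm T j m l :=
          mul_le_mul_of_nonneg_right (ih i m) (Q_nonneg hS m l)
      _ ≤ (T ^ k) i m * T m l :=
          mul_le_mul_of_nonneg_left (Q_le_T hS m l) (Tpow_nonneg hS k i m)

lemma Qpow_col (k : ℕ) (i : Fin n) : ((Qm T j) ^ (k + 1)) i j = 0 := by
  rw [pow_succ, Matrix.mul_apply]
  apply Finset.sum_eq_zero
  intro m _
  rw [show Qm T j m j = 0 from by rw [Qm]; simp, mul_zero]

/-- row sums of Q^k -/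
noncomputable def rs (T : Matrix (Fin n) (Fin n) ℝ) (j : Fin n) (k : ℕ) (i : Fin n) : ℝ :=
  ∑ l, ((Qm T j) ^ k) i l

lemma rs_nonneg (hS : IsStochastic T) (k : ℕ) (i : Fin n) : 0 ≤ rs T j k i :=
  Finset.sum_nonneg fun l _ => Qpow_nonneg hS k i l

lemma rs_zero (i : Fin n) : rs T j 0 i = 1 := by
  simp [rs, Matrix.one_apply]

lemma rs_le_one (hS : IsStochastic T) (k : ℕ) (i : Fin n) : rs T j k i ≤ 1 := by
  rw [← Tpow_rowsum hS k i]
  exact Finset.sum_le_sum fun l _ => Qpow_le_Tpow hS k i l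

lemma rs_add (k m : ℕ) (i : Fin n) :
    rs T j (k + m) i = ∑ l, ((Qm T j) ^ k) i l * rs T j m l := by
  unfold rs
  rw [pow_add]
  simp only [Matrix.mul_apply]
  rw [Finset.sum_comm]
  simp [Finset.mul_sum]

lemma rs_antitone (hS : IsStochastic T) (k m : ℕ) (hkm : k ≤ m) (i : Fin n) :
    rs T j m i ≤ rs T j k i := by
  obtain ⟨d, rfl⟩ := Nat.exists_eq_add_of_le hkm
  rw [rs_add]
  calc ∑ l, ((Qm T j) ^ k) i l * rs T j d l ≤ ∑ l, ((Qm T j) ^ k) i l * 1 :=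
        Finset.sum_le_sum fun l _ =>
          mul_le_mul_of_nonneg_left (rs_le_one hS d l) (Qpow_nonneg hS k i l)
    _ = rs T j k i := by simp [rs]

end MFPT

namespace MFPT

variable {n : ℕ} {T : Matrix (Fin n) (Fin n) ℝ} {j : Fin n}

lemma rs_mul_bound (hS : IsStochastic T) {N : ℕ} {a : ℝ} (ha0 : 0 ≤ a)
    (haN : ∀ i, rs T j N i ≤ a) (m : ℕ) (i : Fin n) :
    rs T j (N * m) i ≤ a ^ m := by
  induction m generalizing i with
  | zero => simpa [rs_zero] using le_refl (1 : ℝ)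
  | succ m ih =>
    have : N * (m + 1) = N * m + N := by ring
    rw [this, rs_add]
    calc ∑ l, ((Qm T j) ^ (N * m)) i l * rs T j N l
        ≤ ∑ l, ((Qm T j) ^ (N * m)) i l * a :=
          Finset.sum_le_sum fun l _ =>
            mul_le_mul_of_nonneg_left (haN l) (Qpow_nonneg hS _ i l)
      _ = rs T j (N * m) i * a := by rw [← Finset.sum_mul]; rfl
      _ ≤ a ^ m * a := mul_le_mul_of_nonneg_right (ih i) ha0
      _ = a ^ (m + 1) := by ring

lemma rs_geom (hS : IsStochastic T) {N : ℕ} (hN : 1 ≤ N) {a : ℝ} (ha0 : 0 < a) (ha1 : a < 1)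
    (haN : ∀ i, rs T j N i ≤ a) :
    ∃ C b : ℝ, 0 ≤ C ∧ 0 < b ∧ b < 1 ∧ ∀ k i, rs T j k i ≤ C * b ^ k := by
  set b : ℝ := a ^ ((N : ℝ)⁻¹) with hb
  have hNR : (0 : ℝ) < (N : ℝ)⁻¹ := by positivity
  have b0 : 0 < b := Real.rpow_pos_of_pos ha0 _
  have b1 : b < 1 := Real.rpow_lt_one ha0.le ha1 hNR
  have bN : b ^ N = a := by
    have hNne : (N : ℝ) ≠ 0 := Nat.cast_ne_zero.mpr (Nat.one_le_iff_ne_zero.mp hN)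
    rw [hb, ← Real.rpow_natCast (a ^ ((N : ℝ)⁻¹)) N, ← Real.rpow_mul ha0.le,
      inv_mul_cancel₀ hNne, Real.rpow_one]
  refine ⟨(b ^ (N - 1))⁻¹, b, inv_nonneg.mpr (pow_nonneg b0.le _), b0, b1, ?_⟩
  intro k i
  have h1 : rs T j k i ≤ a ^ (k / N) := by
    calc rs T j k i ≤ rs T j (N * (k / N)) i :=
          rs_antitone hS _ _ (Nat.mul_div_le k N) i
      _ ≤ a ^ (k / N) := rs_mul_bound hS ha0.le haN _ i
  have h2 : a ^ (k / N) = b ^ (N * (k / N)) := by rw [pow_mul, bN]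
  have h3 : b ^ (N * (k / N)) ≤ b ^ (k - (N - 1)) := by
    apply pow_le_pow_of_le_one b0.le b1.le
    have hmod : k % N ≤ N - 1 := Nat.le_pred_of_lt (Nat.mod_lt _ (Nat.lt_of_lt_of_le one_pos hN))
    have hdm := Nat.div_add_mod k N
    omega
  have h4 : b ^ (k - (N - 1)) * b ^ (N - 1) ≤ b ^ k := by
    rw [← pow_add]
    exact pow_le_pow_of_le_one b0.le b1.le (by omega)
  have hpos : (0 : ℝ) < b ^ (N - 1) := pow_pos b0 _
  calc rs T j k i ≤ b ^ (k - (N - 1)) := le_trans h1 (le_of_eq h2 |>.trans h3)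
    _ = (b ^ (N - 1))⁻¹ * (b ^ (k - (N - 1)) * b ^ (N - 1)) := by field_simp
    _ ≤ (b ^ (N - 1))⁻¹ * b ^ k := by
        exact mul_le_mul_of_nonneg_left h4 (inv_nonneg.mpr hpos.le)

end MFPT

namespace MFPT

variable {n : ℕ} {T : Matrix (Fin n) (Fin n) ℝ} {j : Fin n}

lemma T_le_one (hS : IsStochastic T) (l m : Fin n) : T l m ≤ 1 := by
  rw [← hS.2 l]
  exact Finset.single_le_sum (fun m _ => hS.1 l m) (Finset.mem_univ m)

lemma G_nonneg (hS : IsStochastic T) (k : ℕ) (i : Fin n) :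
    0 ≤ ((Qm T j) ^ k * T) i j := by
  rw [Matrix.mul_apply]
  exact Finset.sum_nonneg fun l _ => mul_nonneg (Qpow_nonneg hS k i l) (hS.1 l j)

lemma G_le_rs (hS : IsStochastic T) (k : ℕ) (i : Fin n) :
    ((Qm T j) ^ k * T) i j ≤ rs T j k i := by
  rw [Matrix.mul_apply]
  apply Finset.sum_le_sum
  intro l _
  calc ((Qm T j) ^ k) i l * T l j ≤ ((Qm T j) ^ k) i l * 1 :=
        mul_le_mul_of_nonneg_left (T_le_one hS l j) (Qpow_nonneg hS k i l)
    _ = ((Qm T j) ^ k) i l := mul_one _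

lemma summable_majorant {C b : ℝ} (hb0 : 0 < b) (hb1 : b < 1) :
    Summable (fun k : ℕ => ((k : ℝ) + 1) * (C * b ^ k)) := by
  have h1 : Summable (fun k : ℕ => (k : ℝ) * b ^ k) := by
    have := summable_pow_mul_geometric_of_norm_lt_one 1 (by
      rw [Real.norm_eq_abs, abs_of_pos hb0]; exact hb1) (R := ℝ)
    simpa using this
  have h2 : Summable (fun k : ℕ => b ^ k) :=
    summable_geometric_of_lt_one hb0.le hb1
  have := (h1.add h2).mul_left C
  apply this.congr
  intro k
  ring

lemma summable_kG (hS : IsStochastic T) {C b : ℝ} (hC : 0 ≤ C) (hb0 : 0 < b) (hb1 : b < 1)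
    (hbd : ∀ k i, rs T j k i ≤ C * b ^ k) (i : Fin n) :
    Summable (fun k : ℕ => ((k : ℝ) + 1) * ((Qm T j) ^ k * T) i j) := by
  apply Summable.of_nonneg_of_le
    (fun k => mul_nonneg (by positivity) (G_nonneg hS k i))
    (fun k => ?_) (summable_majorant hb0 hb1 (C := C))
  exact mul_le_mul_of_nonneg_left ((G_le_rs hS k i).trans (hbd k i)) (by positivity)

lemma summable_G (hS : IsStochastic T) {C b : ℝ} (hC : 0 ≤ C) (hb0 : 0 < b) (hb1 : b < 1)
    (hbd : ∀ k i, rs T j k i ≤ C * b ^ k) (i : Fin n) :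
    Summable (fun k : ℕ => ((Qm T j) ^ k * T) i j) := by
  apply Summable.of_nonneg_of_le (fun k => G_nonneg hS k i) (fun k => ?_)
    ((summable_geometric_of_lt_one hb0.le hb1).mul_left C)
  exact (G_le_rs hS k i).trans (hbd k i)

lemma rs_step (hS : IsStochastic T) (k : ℕ) (i : Fin n) :
    rs T j k i = ((Qm T j) ^ k * T) i j + rs T j (k + 1) i := by
  have h1 : rs T j k i = ∑ m, ((Qm T j) ^ k * T) i m := by
    unfold rs
    simp only [Matrix.mul_apply]
    rw [Finset.sum_comm]
    apply Finset.sum_congr rfl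
    intro l _
    rw [← Finset.mul_sum, hS.2 l, mul_one]
  have h2 : ∀ m, m ≠ j → ((Qm T j) ^ (k + 1)) i m = ((Qm T j) ^ k * T) i m := by
    intro m hm
    rw [pow_succ, Matrix.mul_apply, Matrix.mul_apply]
    apply Finset.sum_congr rfl
    intro l _
    congr 1
    rw [Qm]
    simp [hm]
  rw [h1, ← Finset.add_sum_erase _ _ (Finset.mem_univ j)]
  congr 1
  unfold rs
  rw [← Finset.add_sum_erase _ _ (Finset.mem_univ j), Qpow_col k i, zero_add]
  exact Finset.sum_congr rfl fun m hm => (h2 m (Finset.ne_of_mem_erase hm)).symm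

lemma rs_tendsto_zero {C b : ℝ} (hS : IsStochastic T) (hb0 : 0 < b) (hb1 : b < 1)
    (hbd : ∀ k i, rs T j k i ≤ C * b ^ k) (i : Fin n) :
    Filter.Tendsto (fun k => rs T j k i) Filter.atTop (nhds 0) := by
  apply squeeze_zero (fun k => rs_nonneg hS k i) (fun k => hbd k i)
  have := tendsto_pow_atTop_nhds_zero_of_lt_one hb0.le hb1
  simpa using this.const_mul C

lemma hasSum_G_one (hS : IsStochastic T) {C b : ℝ} (hb0 : 0 < b) (hb1 : b < 1)
    (hbd : ∀ k i, rs T j k i ≤ C * b ^ k) (i : Fin n) :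
    HasSum (fun k : ℕ => ((Qm T j) ^ k * T) i j) 1 := by
  rw [hasSum_iff_tendsto_nat_of_nonneg (fun k => G_nonneg hS k i)]
  have hpar : ∀ m : ℕ, ∑ k ∈ Finset.range m, ((Qm T j) ^ k * T) i j = 1 - rs T j m i := by
    intro m
    induction m with
    | zero => simp [rs_zero]
    | succ m ih =>
      rw [Finset.sum_range_succ, ih]
      have := rs_step (j := j) hS m i
      linarith
  simp only [hpar]
  have h := (rs_tendsto_zero hS hb0 hb1 hbd i).const_sub 1
  simpa using h

end MFPT

namespace MFPT

variable {n : ℕ} {T : Matrix (Fin n) (Fin n) ℝ} {j : Fin n}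

lemma fp_nonneg (hS : IsStochastic T) (i : Fin n) (k : ℕ) :
    0 ≤ firstPassageProb T i j k := by
  apply Finset.sum_nonneg
  intro p _
  split
  · exact Finset.prod_nonneg fun t _ => hS.1 _ _
  · exact le_refl 0

lemma summable_mfpt (hS : IsStochastic T) {C b : ℝ} (hC : 0 ≤ C) (hb0 : 0 < b) (hb1 : b < 1)
    (hbd : ∀ k i, rs T j k i ≤ C * b ^ k) (i : Fin n) :
    Summable (fun k : ℕ => (k : ℝ) * firstPassageProb T i j k) := by
  rw [← summable_nat_add_iff 1]
  apply Summable.congr (summable_kG hS hC hb0 hb1 hbd i)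
  intro k
  rw [fp_pow]
  push_cast
  ring

lemma mfpt_eq_tsum (hS : IsStochastic T) {C b : ℝ} (hC : 0 ≤ C) (hb0 : 0 < b) (hb1 : b < 1)
    (hbd : ∀ k i, rs T j k i ≤ C * b ^ k) (i : Fin n) :
    mfpt T i j = ∑' k : ℕ, ((k : ℝ) + 1) * ((Qm T j) ^ k * T) i j := by
  rw [mfpt, Summable.tsum_eq_zero_add (summable_mfpt hS hC hb0 hb1 hbd i)]
  simp only [Nat.cast_zero, zero_mul, zero_add]
  apply tsum_congr
  intro k
  rw [fp_pow]
  push_cast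
  ring

/-- the linear system satisfied by the mean first passage times -/
lemma mfpt_system (hS : IsStochastic T) {C b : ℝ} (hC : 0 ≤ C) (hb0 : 0 < b) (hb1 : b < 1)
    (hbd : ∀ k i, rs T j k i ≤ C * b ^ k) (i : Fin n) :
    mfpt T i j = 1 + ∑ l, Qm T j i l * mfpt T l j := by
  have hsum : ∀ l, Summable (fun k : ℕ => ((k : ℝ) + 1) * ((Qm T j) ^ k * T) l j) :=
    fun l => summable_kG hS hC hb0 hb1 hbd l
  have hG : ∀ l, Summable (fun k : ℕ => ((Qm T j) ^ k * T) l j) :=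
    fun l => summable_G hS hC hb0 hb1 hbd l
  -- rewrite all mfpt's
  simp only [mfpt_eq_tsum hS hC hb0 hb1 hbd]
  -- the Q-weighted sum
  have step1 : ∑ l, Qm T j i l * ∑' k : ℕ, ((k : ℝ) + 1) * ((Qm T j) ^ k * T) l j
      = ∑' k : ℕ, ((k : ℝ) + 1) * ((Qm T j) ^ (k + 1) * T) i j := by
    have swap : ∑ l, ∑' k : ℕ, Qm T j i l * (((k : ℝ) + 1) * ((Qm T j) ^ k * T) l j)
        = ∑' k : ℕ, ∑ l, Qm T j i l * (((k : ℝ) + 1) * ((Qm T j) ^ k * T) l j) := by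
      exact (Summable.tsum_finsetSum (fun l _ => (hsum l).mul_left _)).symm
    calc ∑ l, Qm T j i l * ∑' k : ℕ, ((k : ℝ) + 1) * ((Qm T j) ^ k * T) l j
        = ∑ l, ∑' k : ℕ, Qm T j i l * (((k : ℝ) + 1) * ((Qm T j) ^ k * T) l j) := by
          apply Finset.sum_congr rfl
          intro l _
          rw [tsum_mul_left]
      _ = ∑' k : ℕ, ∑ l, Qm T j i l * (((k : ℝ) + 1) * ((Qm T j) ^ k * T) l j) := swap
      _ = ∑' k : ℕ, ((k : ℝ) + 1) * ((Qm T j) ^ (k + 1) * T) i j := by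
          apply tsum_congr
          intro k
          rw [pow_succ', Matrix.mul_assoc, Matrix.mul_apply (M := Qm T j)]
          rw [Finset.mul_sum]
          apply Finset.sum_congr rfl
          intro l _
          ring
  rw [step1]
  -- now use shift identities
  set A := ∑' k : ℕ, ((k : ℝ) + 1) * ((Qm T j) ^ k * T) i j with hA
  set B := ∑' k : ℕ, ((Qm T j) ^ k * T) i j with hB
  have hB1 : B = 1 := (hasSum_G_one hS hb0 hb1 hbd i).tsum_eq
  have hshift : ∑' k : ℕ, ((k : ℝ) + 1) * ((Qm T j) ^ (k + 1) * T) i j = A - B := by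
    have hsub : ∀ k : ℕ, ((k : ℝ) + 1) * ((Qm T j) ^ (k + 1) * T) i j
        = (((k + 1 : ℕ) : ℝ) + 1) * ((Qm T j) ^ (k + 1) * T) i j
          - ((Qm T j) ^ (k + 1) * T) i j := by
      intro k; push_cast; ring
    rw [tsum_congr hsub, Summable.tsum_sub ((summable_nat_add_iff 1).mpr (hsum i))
      ((summable_nat_add_iff 1).mpr (hG i))]
    have e1 : ∑' k : ℕ, (((k + 1 : ℕ) : ℝ) + 1) * ((Qm T j) ^ (k + 1) * T) i j
        = A - ((0 : ℝ) + 1) * ((Qm T j) ^ 0 * T) i j := by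
      rw [hA, Summable.tsum_eq_zero_add (hsum i)]
      push_cast
      ring
    have e2 : ∑' k : ℕ, ((Qm T j) ^ (k + 1) * T) i j = B - ((Qm T j) ^ 0 * T) i j := by
      rw [hB, Summable.tsum_eq_zero_add (hG i)]
      ring
    rw [e1, e2]
    ring
  rw [hshift, hB1]
  ring

/-- injectivity of `I - Q` -/
lemma IQ_injective (hS : IsStochastic T) {C b : ℝ} (hC : 0 ≤ C) (hb0 : 0 < b) (hb1 : b < 1)
    (hbd : ∀ k i, rs T j k i ≤ C * b ^ k) (x : Fin n → ℝ)
    (hx : ∀ i, x i = ∑ l, Qm T j i l * x l) : ∀ i, x i = 0 := by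
  have hxk : ∀ k : ℕ, ∀ i, x i = ∑ l, ((Qm T j) ^ k) i l * x l := by
    intro k
    induction k with
    | zero => intro i; simp [Matrix.one_apply]
    | succ k ih =>
      intro i
      rw [hx i]
      calc ∑ l, Qm T j i l * x l = ∑ l, Qm T j i l * ∑ m, ((Qm T j) ^ k) l m * x m := by
            exact Finset.sum_congr rfl fun l _ => by rw [← ih l]
        _ = ∑ m, (∑ l, Qm T j i l * ((Qm T j) ^ k) l m) * x m := by
            simp only [Finset.mul_sum, Finset.sum_mul]
            rw [Finset.sum_comm]
            exact Finset.sum_congr rfl fun m _ => Finset.sum_congr rfl fun l _ => by ring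
        _ = ∑ m, ((Qm T j) ^ (k + 1)) i m * x m := by
            apply Finset.sum_congr rfl
            intro m _
            rw [pow_succ', Matrix.mul_apply]
  set D := ∑ l, |x l| with hD
  have hDl : ∀ l, |x l| ≤ D := fun l =>
    Finset.single_le_sum (fun m (_ : m ∈ Finset.univ) => abs_nonneg (x m)) (Finset.mem_univ l)
  have hbound : ∀ k : ℕ, ∀ i, |x i| ≤ C * b ^ k * D := by
    intro k i
    rw [hxk k i]
    calc |∑ l, ((Qm T j) ^ k) i l * x l| ≤ ∑ l, |((Qm T j) ^ k) i l * x l| :=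
          Finset.abs_sum_le_sum_abs _ _
      _ = ∑ l, ((Qm T j) ^ k) i l * |x l| := by
          apply Finset.sum_congr rfl
          intro l _
          rw [abs_mul, abs_of_nonneg (Qpow_nonneg hS k i l)]
      _ ≤ ∑ l, ((Qm T j) ^ k) i l * D :=
          Finset.sum_le_sum fun l _ =>
            mul_le_mul_of_nonneg_left (hDl l) (Qpow_nonneg hS k i l)
      _ = rs T j k i * D := by rw [← Finset.sum_mul]; rfl
      _ ≤ C * b ^ k * D := by
          apply mul_le_mul_of_nonneg_right (hbd k i)
          exact Finset.sum_nonneg fun l _ => abs_nonneg _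
  intro i
  have htend : Filter.Tendsto (fun k : ℕ => C * b ^ k * D) Filter.atTop (nhds 0) := by
    have := tendsto_pow_atTop_nhds_zero_of_lt_one hb0.le hb1
    have h2 := (this.const_mul C).mul_const D
    simpa using h2
  have : |x i| ≤ 0 := ge_of_tendsto' htend (fun k => hbound k i)
  exact abs_eq_zero.mp (le_antisymm this (abs_nonneg _))

end MFPT

namespace MFPT

variable {n : ℕ} {T : Matrix (Fin n) (Fin n) ℝ}

lemma ergodic_pos (hS : IsStochastic T) (hErg : IsErgodic T) :
    ∃ N : ℕ, 1 ≤ N ∧ ∀ i j, 0 < (T ^ N) i j := by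
  obtain ⟨N, hN⟩ := hErg
  refine ⟨N + 1, Nat.le_add_left 1 N, fun i j => ?_⟩
  rw [pow_succ', Matrix.mul_apply]
  have hex : ∃ l, 0 < T i l := by
    by_contra h
    push_neg at h
    have : ∑ l, T i l = 0 :=
      Finset.sum_eq_zero fun l _ => le_antisymm (h l) (hS.1 i l)
    rw [hS.2 i] at this
    norm_num at this
  obtain ⟨l₀, hl₀⟩ := hex
  apply Finset.sum_pos'
  · exact fun l _ => mul_nonneg (hS.1 i l) (Tpow_nonneg hS N l j)
  · exact ⟨l₀, Finset.mem_univ l₀, mul_pos hl₀ (hN l₀ j)⟩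

lemma stationary_pow (hπ : IsStationary T π) (k : ℕ) :
    ∀ j, ∑ i, π i * (T ^ k) i j = π j := by
  induction k with
  | zero => intro j; simp [Matrix.one_apply]
  | succ k ih =>
    intro j
    have : ∀ i, (T ^ (k + 1)) i j = ∑ m, (T ^ k) i m * T m j := by
      intro i; rw [pow_succ, Matrix.mul_apply]
    simp only [this]
    calc ∑ i, π i * ∑ m, (T ^ k) i m * T m j
        = ∑ m, (∑ i, π i * (T ^ k) i m) * T m j := by
          simp only [Finset.mul_sum, Finset.sum_mul]
          rw [Finset.sum_comm]
          exact Finset.sum_congr rfl fun m _ => Finset.sum_congr rfl fun i _ => by ring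
      _ = ∑ m, π m * T m j := by
          exact Finset.sum_congr rfl fun m _ => by rw [ih m]
      _ = π j := hπ.2.2 j

lemma stationary_pos (hS : IsStochastic T) (hErg : IsErgodic T) (hπ : IsStationary T π)
    (j : Fin n) : 0 < π j := by
  obtain ⟨N, hN1, hN⟩ := ergodic_pos hS hErg
  obtain ⟨i₀, hi₀⟩ : ∃ i₀, 0 < π i₀ := by
    by_contra h
    push_neg at h
    have : ∑ i, π i = 0 := Finset.sum_eq_zero fun i _ => le_antisymm (h i) (hπ.1 i)
    rw [hπ.2.1] at this
    norm_num at this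
  have := stationary_pow hπ N j
  rw [← this]
  calc (0 : ℝ) < π i₀ * (T ^ N) i₀ j := mul_pos hi₀ (hN i₀ j)
    _ ≤ ∑ i, π i * (T ^ N) i j :=
      Finset.single_le_sum (fun i _ => mul_nonneg (hπ.1 i) (Tpow_nonneg hS N i j))
        (Finset.mem_univ i₀)

/-- column constancy from the maximum principle -/
lemma col_const (hS : IsStochastic T) (hErg : IsErgodic T)
    {A : Matrix (Fin n) (Fin n) ℝ} (hA : (1 - T) * A = 0) (j i i' : Fin n) :
    A i j = A i' j := by
  obtain ⟨N, hN1, hN⟩ := ergodic_pos hS hErg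
  have hTA : A = T * A := by
    have h2 : A - T * A = 0 := by
      calc A - T * A = (1 - T) * A := by rw [Matrix.sub_mul, Matrix.one_mul]
        _ = 0 := hA
    have := sub_eq_zero.mp h2
    exact this
  have hTNA : A = T ^ N * A := by
    clear hN hN1
    induction N with
    | zero => simp
    | succ N ih =>
      calc A = T * A := hTA
        _ = T * (T ^ N * A) := by rw [← ih]
        _ = T ^ (N + 1) * A := by rw [pow_succ', Matrix.mul_assoc]
  set c : Fin n → ℝ := fun l => A l j with hc
  have hrec : ∀ l, c l = ∑ m, (T ^ N) l m * c m := by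
    intro l
    have := congrFun (congrFun hTNA l) j
    rw [Matrix.mul_apply] at this
    exact this
  obtain ⟨i₀, -, hmax⟩ := Finset.exists_max_image Finset.univ c ⟨i, Finset.mem_univ i⟩
  have hall : ∀ l, c l = c i₀ := by
    intro l
    by_contra hne
    have hlt : c l < c i₀ := lt_of_le_of_ne (hmax l (Finset.mem_univ l)) hne
    have hstrict : ∑ m, (T ^ N) i₀ m * c m < ∑ m, (T ^ N) i₀ m * c i₀ := by
      apply Finset.sum_lt_sum
      · intro m _
        exact mul_le_mul_of_nonneg_left (hmax m (Finset.mem_univ m)) (Tpow_nonneg hS N i₀ m)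
      · exact ⟨l, Finset.mem_univ l, mul_lt_mul_of_pos_left hlt (hN i₀ l)⟩
    rw [← hrec i₀, ← Finset.sum_mul, Tpow_rowsum hS N i₀, one_mul] at hstrict
    exact lt_irrefl _ hstrict
  rw [show A i j = c i from rfl, show A i' j = c i' from rfl, hall i, hall i']

end MFPT

namespace MFPT

variable {n : ℕ} {T : Matrix (Fin n) (Fin n) ℝ} {π : Fin n → ℝ}
  {Lsharp : Matrix (Fin n) (Fin n) ℝ}

lemma P_eq (hS : IsStochastic T) (hErg : IsErgodic T) (hπ : IsStationary T π)
    (hL : IsGroupInverse (1 - T) Lsharp) :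
    ∀ i j, (1 - (1 - T) * Lsharp) i j = π j := by
  set L : Matrix (Fin n) (Fin n) ℝ := 1 - T with hLdef
  set P : Matrix (Fin n) (Fin n) ℝ := 1 - L * Lsharp with hP
  have hLP : L * P = 0 := by
    have h1 : L * (L * Lsharp) = L := by
      calc L * (L * Lsharp) = L * (Lsharp * L) := by rw [hL.2.2]
        _ = L * Lsharp * L := by rw [Matrix.mul_assoc]
        _ = L := hL.1
    rw [hP, Matrix.mul_sub, Matrix.mul_one, h1, sub_self]
  -- columns of P are constant
  have hconst : ∀ j i i', P i j = P i' j := col_const hS hErg hLP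
  -- π-average of each column of P is π j
  have hπP : ∀ j, ∑ i, π i * P i j = π j := by
    intro j
    have hπL : ∀ m, ∑ i, π i * L i m = 0 := by
      intro m
      have : ∀ i, L i m = (if i = m then 1 else 0) - T i m := by
        intro i
        rw [hLdef]
        simp [Matrix.sub_apply, Matrix.one_apply]
      simp only [this, mul_sub, Finset.sum_sub_distrib]
      rw [hπ.2.2 m]
      have : ∑ i, π i * (if i = m then (1:ℝ) else 0) = π m := by
        rw [Finset.sum_eq_single m]
        · simp
        · intro i _ hi; simp [hi]
        · intro h; exact absurd (Finset.mem_univ m) h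
      rw [this, sub_self]
    have hPe : ∀ i j', P i j' = (if i = j' then 1 else 0) - ∑ m, L i m * Lsharp m j' := by
      intro i j'
      rw [hP]
      simp [Matrix.sub_apply, Matrix.one_apply, Matrix.mul_apply]
    simp only [hPe, mul_sub, Finset.sum_sub_distrib]
    have e1 : ∑ x, π x * (if x = j then (1:ℝ) else 0) = π j := by
      rw [Finset.sum_eq_single j]
      · simp
      · intro x _ hx; simp [hx]
      · intro h; exact absurd (Finset.mem_univ j) h
    have e2 : ∑ x, π x * ∑ m, L x m * Lsharp m j = 0 := by
      calc ∑ x, π x * ∑ m, L x m * Lsharp m j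
          = ∑ m, (∑ x, π x * L x m) * Lsharp m j := by
            simp only [Finset.mul_sum, Finset.sum_mul]
            rw [Finset.sum_comm]
            exact Finset.sum_congr rfl fun m _ => Finset.sum_congr rfl fun x _ => by ring
        _ = 0 := by simp only [hπL]; simp
    rw [e1, e2, sub_zero]
  intro i j
  have h1 : P i j = ∑ i', π i' * P i' j := by
    calc P i j = (∑ i', π i') * P i j := by rw [hπ.2.1, one_mul]
      _ = ∑ i', π i' * P i j := by rw [Finset.sum_mul]
      _ = ∑ i', π i' * P i' j := Finset.sum_congr rfl fun i' _ => by rw [hconst j i i']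
  rw [h1, hπP j]

end MFPT

namespace MFPT

variable {n : ℕ} {T : Matrix (Fin n) (Fin n) ℝ} {π : Fin n → ℝ}
  {Lsharp : Matrix (Fin n) (Fin n) ℝ}

lemma exists_bound (hS : IsStochastic T) (hErg : IsErgodic T) (j : Fin n) :
    ∃ C b : ℝ, 0 ≤ C ∧ 0 < b ∧ b < 1 ∧ ∀ k i, rs T j k i ≤ C * b ^ k := by
  obtain ⟨N, hN1, hN⟩ := ergodic_pos hS hErg
  have hne : (Finset.univ : Finset (Fin n)).Nonempty := ⟨j, Finset.mem_univ j⟩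
  set ε := Finset.univ.inf' hne (fun l => (T ^ N) l j) with hε
  have hε0 : 0 < ε := by
    rw [hε, Finset.lt_inf'_iff]
    exact fun l _ => hN l j
  set a := max (1 - ε) (1 / 2) with ha
  have ha0 : (0 : ℝ) < a := lt_of_lt_of_le (by norm_num) (le_max_right _ _)
  have ha1 : a < 1 := max_lt (by linarith) (by norm_num)
  have haN : ∀ i, rs T j N i ≤ a := by
    intro i
    obtain ⟨N', rfl⟩ : ∃ N', N = N' + 1 := ⟨N - 1, by omega⟩
    have h2 : ε ≤ (T ^ (N' + 1)) i j := Finset.inf'_le _ (Finset.mem_univ i)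
    have h1 : rs T j (N' + 1) i ≤ 1 - (T ^ (N' + 1)) i j := by
      unfold rs
      rw [← Finset.add_sum_erase _ _ (Finset.mem_univ j), Qpow_col N' i, zero_add]
      have hT : ∑ l ∈ Finset.univ.erase j, (T ^ (N' + 1)) i l
          = 1 - (T ^ (N' + 1)) i j := by
        have := Finset.add_sum_erase Finset.univ (fun l => (T ^ (N' + 1)) i l)
          (Finset.mem_univ j)
        rw [Tpow_rowsum hS (N' + 1) i] at this
        linarith
      rw [← hT]
      exact Finset.sum_le_sum fun l _ => Qpow_le_Tpow hS (N' + 1) i l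
    calc rs T j (N' + 1) i ≤ 1 - (T ^ (N' + 1)) i j := h1
      _ ≤ 1 - ε := by linarith
      _ ≤ a := le_max_left _ _
  exact rs_geom hS hN1 ha0 ha1 haN

lemma LJ_zero (hS : IsStochastic T) :
    (1 - T) * (Matrix.of fun _ _ => (1 : ℝ)) = 0 := by
  ext i m
  rw [Matrix.mul_apply]
  have : ∀ l, (1 - T) i l * (Matrix.of fun _ _ => (1:ℝ)) l m = (1 - T) i l := by
    intro l; simp
  simp only [this]
  have : ∀ l, (1 - T) i l = (if i = l then (1:ℝ) else 0) - T i l := by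
    intro l; simp [Matrix.sub_apply, Matrix.one_apply]
  simp only [this]
  rw [Finset.sum_sub_distrib, hS.2 i]
  simp

end MFPT

namespace MFPT

variable {n : ℕ} {T : Matrix (Fin n) (Fin n) ℝ} {π : Fin n → ℝ}
  {Lsharp : Matrix (Fin n) (Fin n) ℝ}

lemma diag_inv (hπ : ∀ j, π j ≠ 0) :
    (Matrix.diagonal π)⁻¹ = Matrix.diagonal (fun j => (π j)⁻¹) := by
  apply Matrix.inv_eq_right_inv
  rw [Matrix.diagonal_mul_diagonal]
  have : (fun j => π j * (π j)⁻¹) = fun _ => (1 : ℝ) := by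
    funext j
    exact mul_inv_cancel₀ (hπ j)
  rw [this, Matrix.diagonal_one]

lemma W_entry (hπ : ∀ j, π j ≠ 0) (i j : Fin n) :
    (((1 - Lsharp + (Matrix.of fun _ _ => (1 : ℝ)) * Matrix.diagonal (fun i => Lsharp i i))
      * (Matrix.diagonal π)⁻¹ : Matrix (Fin n) (Fin n) ℝ)) i j
    = ((if i = j then 1 else 0) - Lsharp i j + Lsharp j j) * (π j)⁻¹ := by
  rw [diag_inv hπ, Matrix.mul_diagonal]
  congr 1
  simp [Matrix.add_apply, Matrix.sub_apply, Matrix.one_apply, Matrix.mul_diagonal]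

lemma W_system (hS : IsStochastic T) (hErg : IsErgodic T) (hπ : IsStationary T π)
    (hL : IsGroupInverse (1 - T) Lsharp) (i j : Fin n) :
    (((1 - Lsharp + (Matrix.of fun _ _ => (1 : ℝ)) * Matrix.diagonal (fun i => Lsharp i i))
      * (Matrix.diagonal π)⁻¹ : Matrix (Fin n) (Fin n) ℝ)) i j
    = 1 + ∑ l, Qm T j i l *
        (((1 - Lsharp + (Matrix.of fun _ _ => (1 : ℝ)) * Matrix.diagonal (fun i => Lsharp i i))
          * (Matrix.diagonal π)⁻¹ : Matrix (Fin n) (Fin n) ℝ)) l j := by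
  set W := (1 - Lsharp + (Matrix.of fun _ _ => (1 : ℝ)) * Matrix.diagonal (fun i => Lsharp i i))
      * (Matrix.diagonal π)⁻¹ with hW
  have hπj : ∀ j, (0 : ℝ) < π j := fun j => stationary_pos hS hErg hπ j
  have hπne : ∀ j, π j ≠ 0 := fun j => ne_of_gt (hπj j)
  have hWjj : W j j = (π j)⁻¹ := by rw [hW, W_entry hπne]; simp
  -- ((1-T) * W) i j = (π j - T i j) * (π j)⁻¹
  have hLW : ((1 - T) * W) i j = (π j - T i j) * (π j)⁻¹ := by
    have hB : (1 - T) * W = (((1 - T) - (1 - T) * Lsharp) * (Matrix.diagonal π)⁻¹) := by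
      rw [hW, ← Matrix.mul_assoc]
      congr 1
      rw [Matrix.mul_add, Matrix.mul_sub, Matrix.mul_one, ← Matrix.mul_assoc,
        LJ_zero hS, Matrix.zero_mul, add_zero]
    rw [hB, diag_inv hπne, Matrix.mul_diagonal]
    have hent : ((1 - T) - (1 - T) * Lsharp) i j = π j - T i j := by
      have hPij := P_eq hS hErg hπ hL i j
      have : ((1 - T) - (1 - T) * Lsharp) i j
          = (1 - T) i j - (1 : Matrix (Fin n) (Fin n) ℝ) i j + (1 - (1 - T) * Lsharp) i j := by
        simp [Matrix.sub_apply, Matrix.add_apply]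
        ring
      rw [this, hPij]
      simp [Matrix.sub_apply, Matrix.one_apply]
      ring
    rw [hent]
  -- expand (1-T)*W entrywise
  have hexp : ((1 - T) * W) i j = W i j - ∑ l, T i l * W l j := by
    rw [Matrix.sub_mul, Matrix.one_mul, Matrix.sub_apply, Matrix.mul_apply]
  -- Q-sum versus T-sum
  have hQs : ∑ l, Qm T j i l * W l j = (∑ l, T i l * W l j) - T i j * W j j := by
    have hterm : ∀ l, Qm T j i l * W l j
        = T i l * W l j - (if l = j then T i j * W j j else 0) := by
      intro l
      rw [Qm]
      by_cases h : l = j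
      · subst h; simp
      · simp [h]
    simp only [hterm]
    rw [Finset.sum_sub_distrib, Finset.sum_ite_eq' Finset.univ]
    simp
  rw [hQs, hWjj]
  rw [hexp] at hLW
  have h0 := hπne j
  field_simp at hLW ⊢
  linarith

end MFPT

namespace MFPT

/-- Meyer. For an ergodic chain with irreducible stochastic transition
matrix `T`, the matrix of mean first passage times satisfies
`M = (I - L^# + J L^#_dg) Π⁻¹`. -/
theorem mfpt_matrix_eq {n : ℕ} (T : Matrix (Fin n) (Fin n) ℝ)
    (hS : IsStochastic T) (hIrr : IsIrreducible T) (hErg : IsErgodic T)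
    (π : Fin n → ℝ) (hπ : IsStationary T π)
    (Lsharp : Matrix (Fin n) (Fin n) ℝ) (hL : IsGroupInverse (1 - T) Lsharp) :
    (Matrix.of fun i j => mfpt T i j) =
      (1 - Lsharp + (Matrix.of fun _ _ => (1 : ℝ)) *
        Matrix.diagonal (fun i => Lsharp i i)) * (Matrix.diagonal π)⁻¹ := by

  ext i j
  rw [Matrix.of_apply]
  obtain ⟨C, b, hC, hb0, hb1, hbd⟩ := exists_bound hS hErg j
  set W := (1 - Lsharp + (Matrix.of fun _ _ => (1 : ℝ)) *
        Matrix.diagonal (fun i => Lsharp i i)) * (Matrix.diagonal π)⁻¹ with hW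
  set x : Fin n → ℝ := fun i' => mfpt T i' j - W i' j with hxdef
  have hx : ∀ i', x i' = ∑ l, Qm T j i' l * x l := by
    intro i'
    have h1 := mfpt_system hS hC hb0 hb1 hbd i'
    have h2 := W_system hS hErg hπ hL i' j
    rw [← hW] at h2
    have : x i' = (1 + ∑ l, Qm T j i' l * mfpt T l j) - (1 + ∑ l, Qm T j i' l * W l j) := by
      rw [hxdef]
      dsimp only
      rw [← h1, ← h2]
    rw [this, add_sub_add_left_eq_sub, ← Finset.sum_sub_distrib]
    apply Finset.sum_congr rfl
    intro l _
    rw [hxdef]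
    ring
  have hzero := IQ_injective hS hC hb0 hb1 hbd x hx i
  have : mfpt T i j - W i j = 0 := hzero
  linarith


end MFPT
end

section
/- If L is the Laplacian matrix of a weighted digraph G on n vertices with in-forest dimension d, then the group inverse of L satisfies L^# = σ_{n-d}^{-1} (Q_{n-d-1} - (σ_{n-d-1}/σ_{n-d}) Q_{n-d}), where σ_k is the total weight of spanning in-forests of G with k arcs and Q_k is the matrix whose (i,j) entry is the total weight of in-forests with k arcs in which vertex i belongs to the tree converging to j. -/
/-!
With `Q_0 = I`, the Laplacian satisfies the matrix-forest recurrence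
`L Q_k = σ_{k+1} I - Q_{k+1}`. Entry `(i, j)` of `L Q_k` is a sum over a `k`-arc forest `F` and
an arc `i → u`, and only the pairs in which `u` does not reach `i` survive. When `i` is a root
of `F`, adding the arc produces every `(k+1)`-arc forest in which `i` is not a root exactly once,
which gives the right-hand side; when `F` already has an arc `i → y`, exchanging it for `i → u`
is a sign-reversing involution.

No in-forest has more than `m = n - d` arcs, so `σ_{m+1} = 0`, `Q_{m+1} = 0` and `L Q_m = 0`.
The recurrence alone then shows that every `Q_k` commutes with `L` and that
`Q_m Q_k = σ_k Q_m`, which is all that is needed to check the three group-inverse equations for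
`σ_m⁻¹ (Q_{m-1} - (σ_{m-1}/σ_m) Q_m)`; a group inverse is unique.
-/

open scoped Classical
open Finset Matrix

namespace Relation

variable {α : Type*} {r r' : α → α → Prop} {i a b v : α}

theorem ReflTransGen.mono_off_or_reaches (h : ∀ x y, x ≠ i → r x y → r' x y)
    (hab : ReflTransGen r a b) : ReflTransGen r' a b ∨ ReflTransGen r' a i := by
  induction hab using ReflTransGen.head_induction_on with
  | refl => exact Or.inl .refl
  | @head x c hxc _ ih =>
    by_cases hx : x = i
    · exact Or.inr (hx ▸ .refl)
    · exact ih.imp (.head (h x c hx hxc)) (.head (h x c hx hxc))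

theorem TransGen.mono_off_or_reaches (h : ∀ x y, x ≠ i → r x y → r' x y)
    (hab : TransGen r a b) : TransGen r' a b ∨ ReflTransGen r' a i := by
  obtain ⟨c, hac, hcb⟩ := TransGen.head'_iff.1 hab
  by_cases ha : a = i
  · exact Or.inr (ha ▸ .refl)
  · exact (hcb.mono_off_or_reaches h).imp (.head' (h a c ha hac)) (.head (h a c ha hac))

theorem ReflTransGen.symm_of_transGen_self (hU : Relator.RightUnique r) (hv : TransGen r v v)
    (hva : ReflTransGen r v a) : ReflTransGen r a v := by
  induction hva with
  | refl => exact .refl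
  | @tail b c _ hbc ih =>
    rcases ih.cases_head with rfl | ⟨c', hbc', hc'v⟩
    · obtain ⟨c', hbc', hc'v⟩ := TransGen.head'_iff.1 hv
      rwa [hU hbc hbc']
    · rwa [hU hbc hbc']

end Relation

theorem groupInverse_unique {M : Type*} [Semigroup M] {a x y : M}
    (hx : a * x * a = a ∧ x * a * x = x ∧ a * x = x * a)
    (hy : a * y * a = a ∧ y * a * y = y ∧ a * y = y * a) : x = y := by
  obtain ⟨hx₁, hx₂, hx₃⟩ := hx
  obtain ⟨hy₁, hy₂, hy₃⟩ := hy
  have hax : a * x = a * y := by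
    calc a * x = a * y * a * x := by rw [hy₁]
      _ = y * a * (a * x) := by rw [hy₃, mul_assoc]
      _ = y * a * (x * a) := by rw [hx₃]
      _ = y * (a * x * a) := by simp only [mul_assoc]
      _ = a * y := by rw [hx₁, hy₃]
  calc x = x * a * x := hx₂.symm
    _ = x * (a * y) := by rw [mul_assoc, hax]
    _ = a * x * y := by rw [← mul_assoc, hx₃]
    _ = y * a * y := by rw [hax, hy₃]
    _ = y := hy₂

section Recurrence

variable {K A : Type*} [CommRing K] [Ring A] [Algebra K A] {L : A} {Q : ℕ → A} {σ : ℕ → K}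

theorem eq_smul_one_sub_mul_of_recurrence (hrec : ∀ k, L * Q k = σ (k + 1) • 1 - Q (k + 1))
    (k : ℕ) : Q (k + 1) = σ (k + 1) • 1 - L * Q k := by
  rw [hrec, sub_sub_cancel]

theorem commute_of_recurrence (hQ0 : Q 0 = 1)
    (hrec : ∀ k, L * Q k = σ (k + 1) • 1 - Q (k + 1)) (k : ℕ) : Commute L (Q k) := by
  induction k with
  | zero => rw [hQ0]; exact Commute.one_right L
  | succ k ih =>
    rw [eq_smul_one_sub_mul_of_recurrence hrec k]
    exact ((Commute.one_right L).smul_right _).sub_right ((Commute.refl L).mul_right ih)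

theorem mul_eq_smul_of_recurrence (hQ0 : Q 0 = 1) (hσ0 : σ 0 = 1)
    (hrec : ∀ k, L * Q k = σ (k + 1) • 1 - Q (k + 1)) {m : ℕ} (hm : Q m * L = 0) :
    ∀ k, Q m * Q k = σ k • Q m
  | 0 => by rw [hQ0, hσ0, mul_one, one_smul]
  | k + 1 => by
    rw [eq_smul_one_sub_mul_of_recurrence hrec k, mul_sub, mul_smul_comm, mul_one, ← mul_assoc,
      hm, zero_mul, sub_zero]

end Recurrence

theorem eq_of_isGroupInverse_of_recurrence {K A : Type*} [Field K] [Ring A] [Algebra K A]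
    {L : A} {Q : ℕ → A} {σ : ℕ → K} {m : ℕ} (hQ0 : Q 0 = 1) (hσ0 : σ 0 = 1)
    (hrec : ∀ k, L * Q k = σ (k + 1) • 1 - Q (k + 1)) (hσm : σ m ≠ 0)
    (hσm' : σ (m + 1) = 0) (hQm' : Q (m + 1) = 0) {Y : A}
    (hY : L * Y * L = L ∧ Y * L * Y = Y ∧ L * Y = Y * L) :
    Y = (σ m)⁻¹ • (Q (m - 1) - (σ (m - 1) / σ m) • Q m) := by
  have hcomm := commute_of_recurrence hQ0 hrec
  have hLQm : L * Q m = 0 := by rw [hrec, hσm', hQm', zero_smul, sub_zero]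
  have hQmL : Q m * L = 0 := (hcomm m).eq ▸ hLQm
  have hLQpred : L * Q (m - 1) = σ m • 1 - Q m := by
    -- for `m = 0` the left side is `L * Q 0` (truncated subtraction) and both sides vanish
    cases m with
    | zero => show L * Q 0 = σ 0 • 1 - Q 0; rw [hLQm, hσ0, hQ0, one_smul, sub_self]
    | succ k => exact hrec k
  set X := (σ m)⁻¹ • (Q (m - 1) - (σ (m - 1) / σ m) • Q m)
  have hLX : L * X = 1 - (σ m)⁻¹ • Q m := by
    rw [mul_smul_comm, mul_sub, mul_smul_comm, hLQpred, hLQm, smul_zero, sub_zero, smul_sub,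
      smul_smul, inv_mul_cancel₀ hσm, one_smul]
  have hXL : Commute L X := ((hcomm _).sub_right ((hcomm m).smul_right _)).smul_right _
  have hQmX : Q m * X = 0 := by
    rw [mul_smul_comm, mul_sub, mul_smul_comm, mul_eq_smul_of_recurrence hQ0 hσ0 hrec hQmL,
      mul_eq_smul_of_recurrence hQ0 hσ0 hrec hQmL, smul_smul, div_mul_cancel₀ _ hσm, sub_self,
      smul_zero]
  refine groupInverse_unique hY ⟨?_, ?_, hXL.eq⟩
  · rw [hLX, sub_mul, one_mul, smul_mul_assoc, hQmL, smul_zero, sub_zero]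
  · rw [← hXL.eq, hLX, sub_mul, one_mul, smul_mul_assoc, hQmX, smul_zero, sub_zero]

namespace MFPT

open Function Relation

variable {n : ℕ} {w : Matrix (Fin n) (Fin n) ℝ} {F G : Fin n → Option (Fin n)} {i j u y a b : Fin n}

section FunctionalGraph

theorem step_rightUnique (F : Fin n → Option (Fin n)) : Relator.RightUnique (Step F) :=
  fun _ _ _ hb hc => Option.some.inj (hb.symm.trans hc)

theorem step_update_iff_of_ne (x : Option (Fin n)) (ha : a ≠ i) :
    Step (update F i x) a b ↔ Step F a b := by
  rw [Step, Step, update_of_ne ha]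

theorem reflTransGen_step_update_self_iff (x : Option (Fin n)) :
    ReflTransGen (Step (update F i x)) a i ↔ ReflTransGen (Step F) a i :=
  ⟨fun h => (h.mono_off_or_reaches fun _ _ hc => (step_update_iff_of_ne x hc).1).elim id id,
    fun h => (h.mono_off_or_reaches fun _ _ hc => (step_update_iff_of_ne x hc).2).elim id id⟩

theorem reflTransGen_step_update_iff (x : Option (Fin n)) (ha : ¬ ReflTransGen (Step F) a i) :
    ReflTransGen (Step (update F i x)) a b ↔ ReflTransGen (Step F) a b := by
  constructor
  · intro h
    exact (h.mono_off_or_reaches fun _ _ hc => (step_update_iff_of_ne x hc).1).resolve_right ha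
  · intro h
    exact (h.mono_off_or_reaches fun _ _ hc => (step_update_iff_of_ne x hc).2).resolve_right
      fun h' => ha ((reflTransGen_step_update_self_iff x).1 h')

theorem eq_of_reflTransGen_of_eq_none (ha : F a = none) (h : ReflTransGen (Step F) a b) :
    a = b := by
  rcases h.cases_head with rfl | ⟨c, hac, -⟩
  · rfl
  · exact absurd (ha ▸ hac : none = some c) (by simp)

theorem inTreeOf_update_iff (x : Option (Fin n)) (ha : ¬ ReflTransGen (Step F) a i) :
    InTreeOf (update F i x) a j ↔ InTreeOf F a j := by
  unfold InTreeOf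
  rw [reflTransGen_step_update_iff x ha]
  exact and_congr_right fun haj => by rw [update_of_ne fun hji : j = i => ha (hji ▸ haj)]

theorem inTreeOf_iff_of_eq_none (hi : F i = none) : InTreeOf F i j ↔ i = j :=
  ⟨fun h => eq_of_reflTransGen_of_eq_none hi h.1, fun h => ⟨h ▸ .refl, h ▸ hi⟩⟩

theorem inTreeOf_iff_of_eq_some (hi : F i = some y) : InTreeOf F i j ↔ InTreeOf F y j := by
  refine ⟨fun ⟨hij, hj⟩ => ⟨?_, hj⟩, fun ⟨hyj, hj⟩ => ⟨.head hi hyj, hj⟩⟩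
  rcases hij.cases_head with rfl | ⟨c, hic, hcj⟩
  · simp [hi] at hj
  · rwa [step_rightUnique F hi hic]

theorem inTreeOf_iff_of_reflTransGen (hui : ReflTransGen (Step F) u i) :
    InTreeOf F u j ↔ InTreeOf F i j := by
  refine ⟨fun ⟨huj, hj⟩ => ⟨?_, hj⟩, fun ⟨hij, hj⟩ => ⟨hui.trans hij, hj⟩⟩
  rcases ReflTransGen.total_of_right_unique (step_rightUnique F) huj hui with hji | hij
  · obtain rfl := eq_of_reflTransGen_of_eq_none hj hji
    exact .refl
  · exact hij

end FunctionalGraph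

section Forest

theorem isInForest_update_none (hF : IsInForest w F) : IsInForest w (update F i none) := by
  refine ⟨fun v x hv => hF.1 v x ?_, fun v hv => hF.2 v (TransGen.mono (fun a b hab => ?_) v v hv)⟩
  · by_cases hvi : v = i
    · subst hvi; simp at hv
    · rwa [update_of_ne hvi] at hv
  · by_cases hai : a = i
    · subst hai; simp [Step] at hab
    · exact (step_update_iff_of_ne none hai).1 hab

theorem not_reflTransGen_of_eq_some (hF : IsInForest w F) (hi : F i = some u) :
    ¬ ReflTransGen (Step F) u i :=
  fun h => hF.2 i (.head' hi h)

theorem isInForest_update_some (hF : IsInForest w F) (hwu : 0 < w i u)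
    (hu : ¬ ReflTransGen (Step F) u i) : IsInForest w (update F i (some u)) := by
  refine ⟨fun v x hv => ?_, fun v hv => ?_⟩
  · by_cases hvi : v = i
    · subst hvi
      obtain rfl : u = x := by simpa using hv
      exact ⟨fun h => hu (h ▸ .refl), hwu⟩
    · exact hF.1 v x (by rwa [update_of_ne hvi] at hv)
  · rcases hv.mono_off_or_reaches (fun _ _ hc => (step_update_iff_of_ne _ hc).1) with hv' | hvi
    · exact hF.2 v hv'
    · -- the cycle through `v` then passes through `i`, whose only arc leads to `u`
      have hvi' := (reflTransGen_step_update_self_iff (some u)).2 hvi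
      have hiv := hvi'.symm_of_transGen_self (step_rightUnique _) hv
      obtain ⟨c, hic, hci⟩ := TransGen.head'_iff.1 ((TransGen.trans_right hiv hv).trans_left hvi')
      obtain rfl : u = c := by simpa [Step] using hic
      exact hu ((reflTransGen_step_update_self_iff _).1 hci)

theorem forestWeight_update (F : Fin n → Option (Fin n)) (i : Fin n) (x : Option (Fin n)) :
    forestWeight w (update F i x) * (F i).elim 1 (w i) = x.elim 1 (w i) * forestWeight w F := by
  simp only [forestWeight, apply_update (fun v (o : Option (Fin n)) => o.elim 1 (w v)),
    prod_update_of_mem (mem_univ i), sdiff_singleton_eq_erase,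
    ← mul_prod_erase univ (fun v => (F v).elim 1 (w v)) (mem_univ i)]
  ring

theorem arcCount_update_some (F : Fin n → Option (Fin n)) (i u : Fin n) :
    arcCount (update F i (some u)) = arcCount (update F i none) + 1 := by
  rw [arcCount, arcCount, ← card_insert_of_notMem (a := i) (by simp)]
  congr 1
  ext v
  by_cases hv : v = i <;> simp [hv]

theorem arcCount_update_some_of_eq_none (hi : F i = none) :
    arcCount (update F i (some u)) = arcCount F + 1 := by
  rw [arcCount_update_some, update_eq_self_iff.2 hi.symm]

theorem arcCount_update_some_of_eq_some (hi : F i = some y) :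
    arcCount (update F i (some u)) = arcCount F := by
  have hF := arcCount_update_some F i y
  rw [update_eq_self_iff.2 hi.symm] at hF
  rw [arcCount_update_some, hF]

theorem forestWeight_pos (hF : IsInForest w F) : 0 < forestWeight w F := by
  refine prod_pos fun v _ => ?_
  rcases hv : F v with _ | u
  · simp
  · simpa using (hF.1 v u hv).2

noncomputable def forests (w : Matrix (Fin n) (Fin n) ℝ) (k : ℕ) :
    Finset (Fin n → Option (Fin n)) :=
  univ.filter fun F => IsInForest w F ∧ arcCount F = k

theorem mem_forests {k : ℕ} : F ∈ forests w k ↔ IsInForest w F ∧ arcCount F = k := by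
  simp [forests]

noncomputable def inTreeWeight (w : Matrix (Fin n) (Fin n) ℝ) (F : Fin n → Option (Fin n))
    (a j : Fin n) : ℝ :=
  if InTreeOf F a j then forestWeight w F else 0

theorem sigmaW_eq_sum (k : ℕ) : sigmaW w k = ∑ F ∈ forests w k, forestWeight w F := by
  rw [forests, sum_filter]; rfl

theorem Qmat_apply (k : ℕ) (i j : Fin n) :
    Qmat w k i j = ∑ F ∈ forests w k, inTreeWeight w F i j := by
  simp only [forests, sum_filter, Qmat, of_apply, inTreeWeight, ← ite_and, and_assoc]

theorem forests_zero : forests w 0 = {fun _ => none} := by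
  ext F
  rw [mem_forests, mem_singleton]
  constructor
  · rintro ⟨-, hF⟩
    funext v
    simp only [arcCount, card_eq_zero, filter_eq_empty_iff, mem_univ, Option.not_isSome_iff_eq_none,
      forall_const] at hF
    exact @hF v
  · rintro rfl
    refine ⟨⟨by simp, fun v hv => ?_⟩, by simp [arcCount]⟩
    obtain ⟨c, hc, -⟩ := TransGen.head'_iff.1 hv
    simp [Step] at hc

theorem sigmaW_zero : sigmaW w 0 = 1 := by
  simp [sigmaW_eq_sum, forests_zero, forestWeight]

theorem Qmat_zero : Qmat w 0 = 1 := by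
  ext i j
  rw [Qmat_apply, forests_zero, sum_singleton, inTreeWeight, inTreeOf_iff_of_eq_none rfl, one_apply]
  simp [forestWeight]

theorem forests_eq_empty {m k : ℕ} (hbound : ∀ F, IsInForest w F → arcCount F ≤ m) (hk : m < k) :
    forests w k = ∅ := by
  ext F
  simp only [mem_forests, notMem_empty, iff_false, not_and]
  intro hF hFk
  have := hbound F hF
  omega

theorem sigmaW_pos {k : ℕ} (hmax : ∃ F, IsInForest w F ∧ arcCount F = k) : 0 < sigmaW w k := by
  obtain ⟨F, hF⟩ := hmax
  rw [sigmaW_eq_sum]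
  exact sum_pos (fun G hG => forestWeight_pos (mem_forests.1 hG).1) ⟨F, mem_forests.2 hF⟩

end Forest

section Recurrence

theorem lap_mul_apply (w M : Matrix (Fin n) (Fin n) ℝ) (i j : Fin n) :
    (lap w * M) i j = ∑ u ∈ univ.erase i, w i u * (M i j - M u j) := by
  have hdiag : lap w i i = ∑ u ∈ univ.erase i, w i u := by rw [lap, of_apply, if_pos rfl]
  have hoff : ∀ u ∈ univ.erase i, lap w i u = - w i u := fun u hu => by
    rw [lap, of_apply, if_neg (ne_of_mem_erase hu).symm]
  rw [mul_apply, ← add_sum_erase _ _ (mem_univ i), hdiag,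
    sum_congr rfl fun u hu => congrArg (· * M u j) (hoff u hu), sum_mul, ← sum_add_distrib]
  exact sum_congr rfl fun u _ => by ring

noncomputable def attachPairs (w : Matrix (Fin n) (Fin n) ℝ) (k : ℕ) (i : Fin n) :
    Finset (Fin n × (Fin n → Option (Fin n))) :=
  (univ.erase i ×ˢ forests w k).filter fun p => 0 < w i p.1 ∧ ¬ ReflTransGen (Step p.2) p.1 i

theorem mem_attachPairs {k : ℕ} :
    (u, F) ∈ attachPairs w k i ↔
      F ∈ forests w k ∧ 0 < w i u ∧ ¬ ReflTransGen (Step F) u i := by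
  simp only [attachPairs, mem_filter, mem_product, mem_erase, mem_univ]
  exact ⟨fun ⟨⟨_, hF⟩, h⟩ => ⟨hF, h⟩,
    fun ⟨hF, hw, hu⟩ => ⟨⟨⟨fun h : u = i => hu (h ▸ .refl), trivial⟩, hF⟩, hw, hu⟩⟩

noncomputable def attachTerm (w : Matrix (Fin n) (Fin n) ℝ) (i j : Fin n)
    (p : Fin n × (Fin n → Option (Fin n))) : ℝ :=
  w i p.1 * (inTreeWeight w p.2 i j - inTreeWeight w p.2 p.1 j)

theorem lap_mul_Qmat_apply (hw : ∀ i j, 0 ≤ w i j) (k : ℕ) (i j : Fin n) :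
    (lap w * Qmat w k) i j = ∑ p ∈ attachPairs w k i, attachTerm w i j p := by
  rw [attachPairs, sum_filter_of_ne, sum_product, lap_mul_apply]
  · simp only [Qmat_apply, attachTerm, mul_sum, ← sum_sub_distrib, mul_sub]
  · rintro ⟨u, F⟩ - hne
    refine ⟨(hw i u).lt_of_ne fun h => hne ?_, fun hui => hne ?_⟩
    · simp [attachTerm, ← h]
    · simp only [attachTerm, inTreeWeight, inTreeOf_iff_of_reflTransGen hui, sub_self, mul_zero]

theorem attachTerm_add_attachTerm_swap (hF : IsInForest w F) (hy : F i = some y)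
    (hu : ¬ ReflTransGen (Step F) u i) :
    attachTerm w i j (u, F) + attachTerm w i j (y, update F i (some u)) = 0 := by
  have hy' := not_reflTransGen_of_eq_some hF hy
  have hweight : w i y * forestWeight w (update F i (some u)) = w i u * forestWeight w F := by
    simpa [hy, mul_comm] using forestWeight_update (w := w) F i (some u)
  simp only [attachTerm, inTreeWeight, inTreeOf_iff_of_eq_some hy,
    inTreeOf_iff_of_eq_some (update_self i (some u) F), inTreeOf_update_iff (some u) hu,
    inTreeOf_update_iff (some u) hy']
  split_ifs <;> linarith

theorem swap_mem_attachPairs {k : ℕ} (hp : (u, F) ∈ attachPairs w k i) (hy : F i = some y) :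
    (y, update F i (some u)) ∈ attachPairs w k i := by
  obtain ⟨hFk, hwu, hu⟩ := mem_attachPairs.1 hp
  obtain ⟨hF, rfl⟩ := mem_forests.1 hFk
  refine mem_attachPairs.2 ⟨mem_forests.2 ⟨isInForest_update_some hF hwu hu,
    arcCount_update_some_of_eq_some hy⟩, (hF.1 i y hy).2, ?_⟩
  rw [reflTransGen_step_update_self_iff]
  exact not_reflTransGen_of_eq_some hF hy

-- exchanging the arc `i → y` of the forest for `i → u` is a sign-reversing involution
theorem sum_attachTerm_of_ne_none (k : ℕ) (i j : Fin n) :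
    ∑ p ∈ (attachPairs w k i).filter (fun p => p.2 i ≠ none), attachTerm w i j p = 0 := by
  refine sum_involution (fun p _ => ((p.2 i).getD i, update p.2 i (some p.1))) ?_ ?_ ?_ ?_
  all_goals
    rintro ⟨u, F⟩ hp
    obtain ⟨hp, hi⟩ := mem_filter.1 hp
    obtain ⟨y, hy⟩ : ∃ y, F i = some y := Option.ne_none_iff_exists'.1 hi
    simp only [hy, Option.getD_some]
  · obtain ⟨hFk, -, hu⟩ := mem_attachPairs.1 hp
    exact attachTerm_add_attachTerm_swap (mem_forests.1 hFk).1 hy hu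
  · intro hne heq
    obtain rfl : y = u := congrArg Prod.fst heq
    simp [attachTerm, inTreeWeight, inTreeOf_iff_of_eq_some hy] at hne
  · exact mem_filter.2 ⟨swap_mem_attachPairs hp hy, by simp⟩
  · simp [update_idem, update_eq_self_iff, hy]

theorem update_mem_forests_of_mem_attachPairs {k : ℕ} (hp : (u, F) ∈ attachPairs w k i)
    (hi : F i = none) : update F i (some u) ∈ forests w (k + 1) := by
  obtain ⟨hFk, hwu, hu⟩ := mem_attachPairs.1 hp
  obtain ⟨hF, rfl⟩ := mem_forests.1 hFk
  exact mem_forests.2 ⟨isInForest_update_some hF hwu hu, arcCount_update_some_of_eq_none hi⟩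

theorem update_none_mem_attachPairs {k : ℕ} (hG : G ∈ forests w (k + 1)) (hu : G i = some u) :
    (u, update G i none) ∈ attachPairs w k i := by
  obtain ⟨hG, hGk⟩ := mem_forests.1 hG
  refine mem_attachPairs.2 ⟨mem_forests.2 ⟨isInForest_update_none hG, ?_⟩, (hG.1 i u hu).2, ?_⟩
  · have := arcCount_update_some G i u
    rw [update_eq_self_iff.2 hu.symm] at this
    omega
  · rw [reflTransGen_step_update_self_iff]
    exact not_reflTransGen_of_eq_some hG hu

theorem attachTerm_of_eq_none (hi : F i = none) (hu : ¬ ReflTransGen (Step F) u i) :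
    attachTerm w i j (u, F) = (if i = j then forestWeight w (update F i (some u)) else 0) -
      inTreeWeight w (update F i (some u)) i j := by
  have hweight : forestWeight w (update F i (some u)) = w i u * forestWeight w F := by
    simpa [hi] using forestWeight_update (w := w) F i (some u)
  simp only [attachTerm, inTreeWeight, inTreeOf_iff_of_eq_none hi,
    inTreeOf_iff_of_eq_some (update_self i (some u) F), inTreeOf_update_iff (some u) hu, hweight]
  split_ifs <;> ring

theorem sum_attachTerm_of_eq_none (k : ℕ) (i j : Fin n) :
    ∑ p ∈ (attachPairs w k i).filter (fun p => p.2 i = none), attachTerm w i j p =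
      ∑ G ∈ (forests w (k + 1)).filter (fun G => G i ≠ none),
        ((if i = j then forestWeight w G else 0) - inTreeWeight w G i j) := by
  refine sum_nbij' (fun p => update p.2 i (some p.1)) (fun G => ((G i).getD i, update G i none))
    ?_ ?_ ?_ ?_ ?_
  · rintro ⟨u, F⟩ hp
    obtain ⟨hp, hi⟩ := mem_filter.1 hp
    exact mem_filter.2 ⟨update_mem_forests_of_mem_attachPairs hp hi, by simp⟩
  · intro G hG
    obtain ⟨hG, hi⟩ := mem_filter.1 hG
    obtain ⟨u, hu⟩ := Option.ne_none_iff_exists'.1 hi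
    simp only [hu, Option.getD_some]
    exact mem_filter.2 ⟨update_none_mem_attachPairs hG hu, update_self _ _ _⟩
  · rintro ⟨u, F⟩ hp
    have hi : F i = none := (mem_filter.1 hp).2
    simp [update_eq_self_iff, hi]
  · intro G hG
    obtain ⟨u, hu⟩ := Option.ne_none_iff_exists'.1 (mem_filter.1 hG).2
    simp [hu, update_eq_self_iff]
  · rintro ⟨u, F⟩ hp
    obtain ⟨hp, hi⟩ := mem_filter.1 hp
    exact attachTerm_of_eq_none hi (mem_attachPairs.1 hp).2.2

theorem smul_one_sub_Qmat_apply (k : ℕ) (i j : Fin n) :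
    (sigmaW w k • (1 : Matrix (Fin n) (Fin n) ℝ) - Qmat w k) i j =
      ∑ G ∈ (forests w k).filter (fun G => G i ≠ none),
        ((if i = j then forestWeight w G else 0) - inTreeWeight w G i j) := by
  rw [sum_filter_of_ne, Matrix.sub_apply, Matrix.smul_apply, one_apply, sigmaW_eq_sum, Qmat_apply,
    smul_eq_mul, sum_mul, ← sum_sub_distrib]
  · exact sum_congr rfl fun G _ => by split_ifs <;> ring
  · intro G _ hne hi
    simp [inTreeWeight, inTreeOf_iff_of_eq_none hi] at hne

theorem lap_mul_Qmat (hw : ∀ i j, 0 ≤ w i j) (k : ℕ) :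
    lap w * Qmat w k = sigmaW w (k + 1) • 1 - Qmat w (k + 1) := by
  ext i j
  rw [lap_mul_Qmat_apply hw, ← sum_filter_add_sum_filter_not _ (fun p => p.2 i = none),
    sum_attachTerm_of_eq_none, sum_attachTerm_of_ne_none, add_zero, smul_one_sub_Qmat_apply]

end Recurrence

theorem groupInverse_eq_forests_general {n : ℕ} (w : Matrix (Fin n) (Fin n) ℝ)
    (hw : ∀ i j, 0 ≤ w i j)
    (d : ℕ)
    (hmax : ∃ F, IsInForest w F ∧ arcCount F = n - d)
    (hbound : ∀ F, IsInForest w F → arcCount F ≤ n - d)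
    (Lsharp : Matrix (Fin n) (Fin n) ℝ) (hL : IsGroupInverse (lap w) Lsharp) :
    Lsharp = (sigmaW w (n - d))⁻¹ •
      (Qmat w (n - d - 1) - (sigmaW w (n - d - 1) / sigmaW w (n - d)) • Qmat w (n - d)) := by
  have hempty : forests w (n - d + 1) = ∅ := forests_eq_empty hbound (Nat.lt_succ_self _)
  have hσ : sigmaW w (n - d + 1) = 0 := by rw [sigmaW_eq_sum, hempty, sum_empty]
  have hQ : Qmat w (n - d + 1) = 0 := by
    ext i j
    rw [Qmat_apply, hempty, sum_empty, Matrix.zero_apply]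
  exact eq_of_isGroupInverse_of_recurrence Qmat_zero sigmaW_zero (lap_mul_Qmat hw)
    (sigmaW_pos hmax).ne' hσ hQ hL

/-- Chebotarev–Agaev. Forest expression of the group inverse of the
Laplacian of a weighted digraph of in-forest dimension `d`:
`L^# = σ_{n-d}⁻¹ (Q_{n-d-1} - (σ_{n-d-1}/σ_{n-d}) Q_{n-d})`. -/
theorem groupInverse_eq_forests {n : ℕ} (w : Matrix (Fin n) (Fin n) ℝ)
    (hw : ∀ i j, 0 ≤ w i j) (hloop : ∀ i, w i i = 0)
    (d : ℕ) (hdn : d ≤ n)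
    (hmax : ∃ F, IsInForest w F ∧ arcCount F = n - d)
    (hbound : ∀ F, IsInForest w F → arcCount F ≤ n - d)
    (Lsharp : Matrix (Fin n) (Fin n) ℝ) (hL : IsGroupInverse (lap w) Lsharp) :
    Lsharp = (sigmaW w (n - d))⁻¹ •
      (Qmat w (n - d - 1) - (sigmaW w (n - d - 1) / sigmaW w (n - d)) • Qmat w (n - d)) :=
  groupInverse_eq_forests_general w hw d hmax hbound Lsharp hL

end MFPT
end

section
/- Let G be a weighted digraph of in-forest dimension 1 (i.e., G possesses a spanning converging tree). Then for all vertices i, j, the (i,j) entry of Q_{n-1} equals the (j,j) entry of Q_{n-1}; that is, every row of the matrix Q_{n-1} of weights of maximum in-forests is the same, each entry of column j equaling the total weight q_j of spanning trees converging to j. -/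
open scoped Classical
open Finset Matrix

namespace MFPT

lemma exists_root {n : ℕ} (F : Fin n → Option (Fin n))
    (hF : ∀ v, ¬ Relation.TransGen (Step F) v v) (v : Fin n) :
    ∃ r, Relation.ReflTransGen (Step F) v r ∧ F r = none := by
  have hwf : WellFounded (fun a b : Fin n => Step F b a) := by
    have hir : IsIrrefl (Fin n) (Relation.TransGen fun a b : Fin n => Step F b a) :=
      ⟨fun v h => hF v (Relation.transGen_swap.mp h)⟩
    have t : WellFounded (Relation.TransGen fun a b : Fin n => Step F b a) :=
      Finite.wellFounded_of_trans_of_irrefl _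
    exact Subrelation.wf (q := fun a b : Fin n => Step F b a)
      (r := Relation.TransGen fun a b : Fin n => Step F b a)
      (fun h => Relation.TransGen.single h) t
  refine hwf.induction
    (C := fun v => ∃ r, Relation.ReflTransGen (Step F) v r ∧ F r = none) v ?_
  intro x ih
  cases hx : F x with
  | none => exact ⟨x, .refl, hx⟩
  | some u =>
    obtain ⟨r, hr, hrn⟩ := ih u hx
    exact ⟨r, .head hx hr, hrn⟩

lemma root_unique {n : ℕ} {F : Fin n → Option (Fin n)} (hc : arcCount F = n - 1)
    {a b : Fin n} (ha : F a = none) (hb : F b = none) : a = b := by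
  by_contra hab
  have h2 : 2 ≤ (Finset.univ.filter fun v => F v = none).card :=
    Finset.one_lt_card.mpr ⟨a, by simp [ha], b, by simp [hb], hab⟩
  have hsum : (Finset.univ.filter fun v => (F v).isSome).card
      + (Finset.univ.filter fun v => ¬ (F v).isSome).card = n := by
    rw [Finset.card_filter_add_card_filter_not]
    simp
  have heq : (Finset.univ.filter fun v => ¬ (F v).isSome)
      = (Finset.univ.filter fun v => F v = none) := by
    apply Finset.filter_congr
    intro v _
    simp [Option.not_isSome_iff_eq_none]
  have hn : 0 < n := a.pos
  unfold arcCount at hc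
  rw [heq] at hsum
  omega

/-- For a digraph of in-forest dimension 1, every row of `Q_{n-1}` is the
same: `(Q_{n-1})_{ij} = (Q_{n-1})_{jj} = q_j` for all `i, j`. -/
theorem Qmat_maximal_rows_equal {n : ℕ} (w : Matrix (Fin n) (Fin n) ℝ)
    (hw : ∀ i j, 0 ≤ w i j) (hloop : ∀ i, w i i = 0)
    (hdim : ∃ F, IsInForest w F ∧ arcCount F = n - 1) :
    ∀ i j, Qmat w (n - 1) i j = Qmat w (n - 1) j j ∧ Qmat w (n - 1) i j = treeWeight w j := by
  intro i j
  have key : ∀ i : Fin n, Qmat w (n - 1) i j = treeWeight w j := by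
    intro i
    unfold Qmat treeWeight
    simp only [Matrix.of_apply]
    refine Finset.sum_congr rfl fun F _ => ?_
    refine if_congr ?_ rfl rfl
    constructor
    · rintro ⟨hF, hc, hin⟩
      exact ⟨hF, hc, hin.2⟩
    · rintro ⟨hF, hc, hj⟩
      obtain ⟨r, hr, hrn⟩ := exists_root F hF.2 i
      exact ⟨hF, hc, (root_unique hc hrn hj ▸ hr), hj⟩
  exact ⟨(key i).trans (key j).symm, key i⟩

end MFPT
end

section
/- For an ergodic Markov chain with irreducible stochastic transition matrix T, stationary distribution π, and L = I - T, the group inverse satisfies L^# = (L + J̃)^{-1} - J̃, where J̃ = 𝟙 π is the outer product of the all-ones column vector with the row vector π. -/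
open scoped Classical
open Finset Matrix

namespace MFPT

lemma isStochastic_pow {n : ℕ} (T : Matrix (Fin n) (Fin n) ℝ) (h : IsStochastic T) (k : ℕ) :
    IsStochastic (T ^ k) := by
  induction k with
  | zero =>
      refine ⟨fun i j => ?_, fun i => ?_⟩
      · simp [Matrix.one_apply]
        split <;> norm_num
      · simp [Matrix.one_apply]
  | succ m ih =>
      obtain ⟨ih0, ih1⟩ := ih
      obtain ⟨h0, h1⟩ := h
      refine ⟨fun i j => ?_, fun i => ?_⟩
      · rw [pow_succ, Matrix.mul_apply]
        exact Finset.sum_nonneg fun k _ => mul_nonneg (ih0 i k) (h0 k j)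
      · rw [pow_succ]
        simp only [Matrix.mul_apply]
        rw [Finset.sum_comm]
        calc ∑ k, ∑ j, (T ^ m) i k * T k j
              = ∑ k, (T ^ m) i k * ∑ j, T k j := by
                simp [Finset.mul_sum]
          _ = ∑ k, (T ^ m) i k := by simp [h1]
          _ = 1 := ih1 i

lemma const_of_fixed {n : ℕ} (P : Matrix (Fin n) (Fin n) ℝ)
    (hpos : ∀ i j, 0 < P i j) (hrow : ∀ i, ∑ j, P i j = 1)
    (w : Fin n → ℝ) (hw : P.mulVec w = w) (i j : Fin n) : w i = w j := by
  obtain ⟨i₀, -, hmax⟩ := Finset.exists_max_image Finset.univ w ⟨i, Finset.mem_univ i⟩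
  have key : ∀ k : Fin n, w k = w i₀ := by
    have hfix : ∑ k, P i₀ k * w k = w i₀ := by
      have := congrFun hw i₀
      simpa [Matrix.mulVec, dotProduct] using this
    have hsum : ∑ k, P i₀ k * (w i₀ - w k) = 0 := by
      have : ∑ k, P i₀ k * (w i₀ - w k)
          = (∑ k, P i₀ k) * w i₀ - ∑ k, P i₀ k * w k := by
        rw [Finset.sum_mul]
        rw [← Finset.sum_sub_distrib]
        congr 1; ext k; ring
      rw [this, hrow, hfix]; ring
    intro k
    have hterm : P i₀ k * (w i₀ - w k) = 0 := by
      have hnn : ∀ m ∈ Finset.univ, 0 ≤ P i₀ m * (w i₀ - w m) := fun m _ =>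
        mul_nonneg (hpos i₀ m).le (sub_nonneg.2 (hmax m (Finset.mem_univ m)))
      exact (Finset.sum_eq_zero_iff_of_nonneg hnn).1 hsum k (Finset.mem_univ k)
    have := mul_eq_zero.1 hterm
    rcases this with h | h
    · exact absurd h (hpos i₀ k).ne'
    · linarith [sub_eq_zero.1 h]
  rw [key i, key j]

/-- `L^# = (L + J̃)⁻¹ - J̃` where `J̃ = 𝟙π`; in particular `L + 𝟙π` is
invertible. -/
theorem groupInverse_eq_inv_sub {n : ℕ} (T : Matrix (Fin n) (Fin n) ℝ)
    (hS : IsStochastic T) (hIrr : IsIrreducible T) (hErg : IsErgodic T)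
    (π : Fin n → ℝ) (hπ : IsStationary T π)
    (Lsharp : Matrix (Fin n) (Fin n) ℝ) (hL : IsGroupInverse (1 - T) Lsharp) :
    IsUnit ((1 - T) + Matrix.of fun _ j => π j) ∧
      Lsharp = ((1 - T) + Matrix.of fun _ j => π j)⁻¹ - Matrix.of fun _ j => π j := by
  obtain ⟨hT0, hT1⟩ := hS
  obtain ⟨hπ0, hπ1, hπs⟩ := hπ
  obtain ⟨N, hNpos⟩ := hErg
  obtain ⟨h1, h2, h3⟩ := hL
  set L : Matrix (Fin n) (Fin n) ℝ := 1 - T with hLdef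
  set J : Matrix (Fin n) (Fin n) ℝ := Matrix.of fun _ j => π j with hJdef
  set X : Matrix (Fin n) (Fin n) ℝ := Lsharp with hXdef
  have hrowL : ∀ i, ∑ k, L i k = 0 := by
    intro i
    simp only [hLdef, Matrix.sub_apply, Finset.sum_sub_distrib, Matrix.one_apply]
    simp [hT1 i]
  have hπL : ∀ k, ∑ i, π i * L i k = 0 := by
    intro k
    simp only [hLdef, Matrix.sub_apply, mul_sub, Finset.sum_sub_distrib, Matrix.one_apply]
    simp [hπs k]
  -- the key identity X * L = 1 - J
  have hLP : L * (1 - X * L) = 0 := by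
    rw [mul_sub, mul_one, ← Matrix.mul_assoc, h1, sub_self]
  have hP : (1 : Matrix (Fin n) (Fin n) ℝ) - X * L = J := by
    ext i j
    set P : Matrix (Fin n) (Fin n) ℝ := 1 - X * L with hPdef
    set w : Fin n → ℝ := fun k => P k j with hwdef
    have hwfix : T.mulVec w = w := by
      funext i'
      have h0 : ∑ k, L i' k * P k j = 0 := by
        have := congrFun (congrFun hLP i') j
        simpa [Matrix.mul_apply] using this
      have : ∑ k, ((1 : Matrix (Fin n) (Fin n) ℝ) i' k - T i' k) * P k j = 0 := by
        simpa [hLdef, Matrix.sub_apply] using h0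
      have h1' : P i' j - ∑ k, T i' k * P k j = 0 := by
        rw [← this]
        simp only [sub_mul, Finset.sum_sub_distrib, Matrix.one_apply]
        simp
      have : ∑ k, T i' k * P k j = P i' j := by linarith
      simpa [Matrix.mulVec, dotProduct, hwdef] using this
    have hwN : (T ^ N).mulVec w = w := by
      clear hNpos
      induction N with
      | zero => simp [Matrix.one_mulVec]
      | succ m ih =>
          rw [pow_succ, ← Matrix.mulVec_mulVec, hwfix, ih]
    obtain ⟨hTN0, hTN1⟩ := isStochastic_pow T ⟨hT0, hT1⟩ N
    have hconst : ∀ k k' : Fin n, w k = w k' := fun k k' =>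
      const_of_fixed (T ^ N) hNpos hTN1 w hwN k k'
    -- π-weighted row sum of P equals both π j and P i j
    have hXL0 : ∑ i', π i' * (X * L) i' j = 0 := by
      rw [← h3]
      simp only [Matrix.mul_apply, Finset.mul_sum]
      rw [Finset.sum_comm]
      have : ∀ k, ∑ i', π i' * (L i' k * X k j) = 0 := by
        intro k
        have : ∑ i', π i' * L i' k * X k j = (∑ i', π i' * L i' k) * X k j := by
          rw [Finset.sum_mul]
        simp only [← mul_assoc]
        rw [this, hπL k, zero_mul]
      simp [this]
    have hπP : ∑ i', π i' * P i' j = π j := by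
      simp only [hPdef, Matrix.sub_apply, mul_sub, Finset.sum_sub_distrib]
      rw [hXL0]
      simp only [Matrix.one_apply]
      simp
    have hPconst : ∑ i', π i' * P i' j = P i j := by
      have : ∀ i', π i' * P i' j = π i' * P i j := by
        intro i'
        exact congrArg (fun t => π i' * t) (hconst i' i)
      rw [Finset.sum_congr rfl fun i' _ => this i', ← Finset.sum_mul, hπ1, one_mul]
    have : P i j = π j := by rw [← hPconst, hπP]
    simpa [hPdef, hJdef] using this
  have hXL : X * L = 1 - J := by
    have := hP
    linear_combination (norm := abel) -this
  have hLX : L * X = 1 - J := by rw [h3, hXL]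
  have hLJ : L * J = 0 := by
    ext i j
    simp only [Matrix.mul_apply, hJdef, Matrix.of_apply, Matrix.zero_apply]
    rw [← Finset.sum_mul, hrowL, zero_mul]
  have hJL : J * L = 0 := by
    ext i j
    simp only [Matrix.mul_apply, hJdef, Matrix.of_apply, Matrix.zero_apply]
    exact hπL j
  have hJJ : J * J = J := by
    ext i j
    simp only [Matrix.mul_apply, hJdef, Matrix.of_apply]
    rw [← Finset.sum_mul, hπ1, one_mul]
  have hJX : J * X = 0 := by
    rw [← hP, sub_mul, one_mul, h2, sub_self]
  have hXJ : X * J = 0 := by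
    rw [← hP, mul_sub, mul_one, ← h3, ← Matrix.mul_assoc, h2, sub_self]
  have hmul1 : (L + J) * (X + J) = 1 := by
    rw [add_mul, mul_add, mul_add, hLX, hLJ, hJX, hJJ]
    abel
  have hmul2 : (X + J) * (L + J) = 1 := by
    rw [add_mul, mul_add, mul_add, hXL, hXJ, hJL, hJJ]
    abel
  refine ⟨⟨⟨L + J, X + J, hmul1, hmul2⟩, rfl⟩, ?_⟩
  have hinv : (L + J)⁻¹ = X + J := Matrix.inv_eq_left_inv hmul2
  rw [hinv]
  abel

end MFPT
end
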